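/- arXiv:1803.04890 — 9 statements merged into one kernel-verified Lean document; each statement's English description precedes it below -/
import Mathlib

section
/- For every f in the Fock space F²(ℂ), every k ∈ ℕ, and every z ∈ ℂ, the k-th derivative satisfies |f^{(k)}(z)| ≤ e^{k(k+1)} (1+|z|)^k e^{|z|²/2} ‖f‖. -/
open MeasureTheory Complex Finset

noncomputable def fockNorm (f : ℂ → ℂ) : ℝ :=
  Real.sqrt ((1 / Real.pi) * ∫ z : ℂ, ‖f z‖ ^ 2 * Real.exp (-‖z‖ ^ 2))

def MemFock (f : ℂ → ℂ) : Prop :=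
  Differentiable ℂ f ∧
    MeasureTheory.Integrable (fun z : ℂ => ‖f z‖ ^ 2 * Real.exp (-‖z‖ ^ 2))

section helpers
open Metric Set

-- mean value lemma
theorem meanval (g : ℂ → ℂ) (hg : Differentiable ℂ g) (r : ℝ) (hr : 0 < r) :
    2 * Real.pi * ‖g 0‖^2 ≤ ∫ θ in (0:ℝ)..2*Real.pi, ‖g (circleMap 0 r θ)‖^2 := by
  set h : ℂ → ℂ := fun w => g w * g w with hh
  have hd : Differentiable ℂ h := hg.mul hg
  have hmv : ((2 * Real.pi * I : ℂ)⁻¹ • ∮ w in C(0, r), (w - 0)⁻¹ • h w) = h 0 :=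
    (hd.diffContOnCl).two_pi_i_inv_smul_circleIntegral_sub_inv_smul (mem_ball_self hr)
  have hcirc : (∮ w in C(0, r), (w - 0)⁻¹ • h w)
      = I • ∫ θ in (0:ℝ)..2*Real.pi, h (circleMap 0 r θ) := by
    rw [circleIntegral, ← intervalIntegral.integral_smul]
    refine intervalIntegral.integral_congr fun θ _ => ?_
    have hne : circleMap 0 r θ ≠ 0 := circleMap_ne_center hr.ne'
    simp only [deriv_circleMap, circleMap_zero_radius, smul_eq_mul, sub_zero]
    field_simp
  have key : ‖h 0‖ ≤ (2 * Real.pi)⁻¹ * ∫ θ in (0:ℝ)..2*Real.pi, ‖h (circleMap 0 r θ)‖ := by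
    rw [← hmv, hcirc, norm_smul, norm_smul]
    have h1 : ‖(2 * Real.pi * I : ℂ)⁻¹‖ = (2*Real.pi)⁻¹ := by
      rw [norm_inv]
      simp [_root_.abs_of_nonneg Real.pi_nonneg]
    rw [h1, Complex.norm_I, one_mul]
    exact mul_le_mul_of_nonneg_left
      (intervalIntegral.norm_integral_le_integral_norm (by positivity)) (by positivity)
  have hnorm : ∀ w, ‖h w‖ = ‖g w‖^2 := fun w => by rw [hh]; simp [norm_mul, sq]
  rw [hnorm] at key
  have h2 : (∫ θ in (0:ℝ)..2*Real.pi, ‖h (circleMap 0 r θ)‖)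
      = ∫ θ in (0:ℝ)..2*Real.pi, ‖g (circleMap 0 r θ)‖^2 :=
    intervalIntegral.integral_congr fun θ _ => hnorm _
  rw [h2] at key
  have hpi : (0:ℝ) < 2 * Real.pi := by positivity
  calc 2 * Real.pi * ‖g 0‖^2 ≤ 2 * Real.pi * ((2 * Real.pi)⁻¹ *
        ∫ θ in (0:ℝ)..2*Real.pi, ‖g (circleMap 0 r θ)‖^2) :=
      mul_le_mul_of_nonneg_left key (by positivity)
    _ = _ := by field_simp

theorem integrableOn_polar_real {E : Type*} [NormedAddCommGroup E] [NormedSpace ℝ E]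
    {f : ℝ × ℝ → E} (hf : Integrable f) :
    IntegrableOn (fun p : ℝ × ℝ => p.1 • f (_root_.polarCoord.symm p)) _root_.polarCoord.target := by
  set B : ℝ × ℝ → ℝ × ℝ →L[ℝ] ℝ × ℝ := fun p =>
    LinearMap.toContinuousLinearMap (Matrix.toLin (Module.Basis.finTwoProd ℝ) (Module.Basis.finTwoProd ℝ)
      !![Real.cos p.2, -p.1 * Real.sin p.2; Real.sin p.2, p.1 * Real.cos p.2])
  have A : ∀ p ∈ _root_.polarCoord.symm.source, HasFDerivAt _root_.polarCoord.symm (B p) p := fun p _ =>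
    hasFDerivAt_polarCoord_symm p
  have B_det : ∀ p, (B p).det = p.1 := by
    intro p
    conv_rhs => rw [← one_mul p.1, ← Real.cos_sq_add_sin_sq p.2]
    simp only [B, neg_mul, LinearMap.det_toContinuousLinearMap, LinearMap.det_toLin,
      Matrix.det_fin_two_of, sub_neg_eq_add]
    ring
  have hmeas : MeasurableSet _root_.polarCoord.target := _root_.polarCoord.open_target.measurableSet
  have hinj : Set.InjOn _root_.polarCoord.symm _root_.polarCoord.target :=
    _root_.polarCoord.symm.injOn
  have hA : ∀ p ∈ _root_.polarCoord.target,
      HasFDerivWithinAt _root_.polarCoord.symm (B p) _root_.polarCoord.target p :=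
    fun p hp => (A p hp).hasFDerivWithinAt
  have himg : _root_.polarCoord.symm '' _root_.polarCoord.target = _root_.polarCoord.source :=
    _root_.polarCoord.symm_image_target_eq_source
  have h1 : IntegrableOn f (_root_.polarCoord.symm '' _root_.polarCoord.target) := by
    rw [himg]; exact hf.integrableOn
  have h2 := (integrableOn_image_iff_integrableOn_abs_det_fderiv_smul volume hmeas hA hinj f).mp h1
  refine h2.congr_fun (fun p hp => ?_) hmeas
  dsimp only
  rw [B_det, abs_of_pos hp.1]

theorem integrableOn_polar_cx {E : Type*} [NormedAddCommGroup E] [NormedSpace ℝ E]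
    {f : ℂ → E} (hf : Integrable f) :
    IntegrableOn (fun p : ℝ × ℝ => p.1 • f (Complex.polarCoord.symm p))
      _root_.polarCoord.target := by
  have h : Integrable (fun p : ℝ × ℝ => f (Complex.measurableEquivRealProd.symm p)) := by
    exact ((Complex.volume_preserving_equiv_real_prod.symm).integrable_comp_emb
      Complex.measurableEquivRealProd.symm.measurableEmbedding).mpr hf
  have := integrableOn_polar_real h
  exact this.congr_fun (fun p _ => rfl) _root_.polarCoord.open_target.measurableSet

theorem int_r_exp : (∫ r in Set.Ioi (0:ℝ), r * Real.exp (-r^2)) = 1/2 := by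
  have hint : IntegrableOn (fun r : ℝ => r * Real.exp (-r^2)) (Set.Ioi 0) := by
    have := (integrable_rpow_mul_exp_neg_mul_sq (b := 1) one_pos (s := 1) (by norm_num)).integrableOn
      (s := Set.Ioi (0:ℝ))
    refine this.congr_fun (fun x _ => ?_) measurableSet_Ioi
    dsimp only
    rw [Real.rpow_one]; ring_nf
  have hderiv : ∀ x ∈ Set.Ici (0:ℝ),
      HasDerivAt (fun r : ℝ => -Real.exp (-r^2)/2) (x * Real.exp (-x^2)) x := by
    intro x _
    have h1 : HasDerivAt (fun r : ℝ => -r^2) (-(2*x)) x := by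
      simpa using ((hasDerivAt_pow 2 x).fun_neg)
    have h2 := (h1.exp).fun_neg.div_const 2
    refine h2.congr_deriv ?_
    ring_nf
  have htend : Filter.Tendsto (fun r : ℝ => -Real.exp (-r^2)/2) Filter.atTop (nhds 0) := by
    have : Filter.Tendsto (fun r : ℝ => -r^2) Filter.atTop Filter.atBot := by
      apply Filter.tendsto_neg_atBot_iff.mpr
      exact Filter.tendsto_pow_atTop (by norm_num)
    have := (Real.tendsto_exp_atBot.comp this).neg.div_const 2
    simpa using this
  have := MeasureTheory.integral_Ioi_of_hasDerivAt_of_tendsto' hderiv hint htend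
  rw [this]; norm_num

theorem pointEval_zero (g : ℂ → ℂ) (hg : Differentiable ℂ g)
    (hI : Integrable (fun w : ℂ => ‖g w‖^2 * Real.exp (-‖w‖^2))) :
    ‖g 0‖^2 * Real.pi ≤ ∫ w : ℂ, ‖g w‖^2 * Real.exp (-‖w‖^2) := by
  set Fg : ℂ → ℝ := fun w => ‖g w‖^2 * Real.exp (-‖w‖^2) with hFg
  set π' := Real.pi
  have hIO := integrableOn_polar_cx hI
  have htarget : _root_.polarCoord.target = Set.Ioi (0:ℝ) ×ˢ Set.Ioo (-π') π' := rfl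
  have hprod : Integrable (fun p : ℝ × ℝ => p.1 • Fg (Complex.polarCoord.symm p))
      ((volume.restrict (Set.Ioi (0:ℝ))).prod (volume.restrict (Set.Ioo (-π') π'))) := by
    rw [Measure.prod_restrict, ← MeasureTheory.Measure.volume_eq_prod]
    rwa [htarget] at hIO
  have hswap := MeasureTheory.integral_prod _ hprod
  have hmarg := hprod.integral_prod_left
  -- connect full integral with product integral
  have hfull : (∫ z : ℝ × ℝ, z.1 • Fg (Complex.polarCoord.symm z)
        ∂((volume.restrict (Set.Ioi (0:ℝ))).prod (volume.restrict (Set.Ioo (-π') π'))))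
        = ∫ w : ℂ, Fg w := by
    rw [Measure.prod_restrict, ← MeasureTheory.Measure.volume_eq_prod, ← htarget]
    exact Complex.integral_comp_polarCoord_symm Fg
  -- inner integral evaluation
  have hinner : ∀ r : ℝ, r ∈ Set.Ioi (0:ℝ) →
      (∫ θ in Set.Ioo (-π') π', (r:ℝ) • Fg (Complex.polarCoord.symm (r, θ)))
        = ∫ θ in (0:ℝ)..2*π', ‖g (circleMap 0 r θ)‖^2 * (r * Real.exp (-r^2)) := by
    intro r hr
    have hr' : (0:ℝ) < r := hr
    have hcm : ∀ θ : ℝ, Complex.polarCoord.symm (r, θ) = circleMap 0 r θ := by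
      intro θ
      rw [Complex.polarCoord_symm_apply]
      simp [circleMap, Complex.exp_mul_I]
    have hval : ∀ θ : ℝ, (r:ℝ) • Fg (Complex.polarCoord.symm (r, θ))
        = ‖g (circleMap 0 r θ)‖^2 * (r * Real.exp (-r^2)) := by
      intro θ
      rw [hcm θ, smul_eq_mul, hFg]
      have : ‖circleMap 0 r θ‖ = r := by
        simp [norm_circleMap_zero, abs_of_pos hr']
      simp only []
      rw [this]
      ring
    simp_rw [hval]
    have h1 : (∫ θ in Set.Ioo (-π') π',
          ‖g (circleMap 0 r θ)‖^2 * (r * Real.exp (-r^2)))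
        = ∫ θ in (-π')..π', ‖g (circleMap 0 r θ)‖^2 * (r * Real.exp (-r^2)) := by
      rw [intervalIntegral.integral_of_le (by linarith [Real.pi_pos] : -π' ≤ π'),
        MeasureTheory.integral_Ioc_eq_integral_Ioo]
    rw [h1]
    have hper : Function.Periodic
        (fun θ => ‖g (circleMap 0 r θ)‖^2 * (r * Real.exp (-r^2))) (2*π') :=
      fun θ => by dsimp only; rw [periodic_circleMap 0 r θ]
    have := hper.intervalIntegral_add_eq (-π') 0
    have e1 : -π' + 2*π' = π' := by ring
    have e2 : (0:ℝ) + 2*π' = 2*π' := by ring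
    rw [e1, e2] at this
    rw [this]
  -- the lower bound function
  have hmono : ∀ r ∈ Set.Ioi (0:ℝ),
      2*π'*‖g 0‖^2 * (r * Real.exp (-r^2)) ≤
        ∫ θ in Set.Ioo (-π') π', (r:ℝ) • Fg (Complex.polarCoord.symm (r, θ)) := by
    intro r hr
    rw [hinner r hr, intervalIntegral.integral_mul_const]
    have hr0 : (0:ℝ) < r := hr
    have := meanval g hg r hr
    have hnn : (0:ℝ) ≤ r * Real.exp (-r^2) := by positivity
    calc 2*π'*‖g 0‖^2 * (r * Real.exp (-r^2))
        ≤ (∫ θ in (0:ℝ)..2*π', ‖g (circleMap 0 r θ)‖^2) * (r * Real.exp (-r^2)) :=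
          mul_le_mul_of_nonneg_right this hnn
      _ = _ := rfl
  -- integrate
  have hle : (∫ r in Set.Ioi (0:ℝ), 2*π'*‖g 0‖^2 * (r * Real.exp (-r^2)))
      ≤ ∫ r in Set.Ioi (0:ℝ), ∫ θ in Set.Ioo (-π') π',
          (r:ℝ) • Fg (Complex.polarCoord.symm (r, θ)) := by
    refine integral_mono_of_nonneg ?_ hmarg ?_
    · refine (ae_restrict_iff' measurableSet_Ioi).mpr (Filter.Eventually.of_forall ?_)
      intro r hr
      have : (0:ℝ) < r := hr
      positivity
    · exact (ae_restrict_iff' measurableSet_Ioi).mpr (Filter.Eventually.of_forall hmono)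
  have hlhs : (∫ r in Set.Ioi (0:ℝ), 2*π'*‖g 0‖^2 * (r * Real.exp (-r^2)))
      = ‖g 0‖^2 * π' := by
    rw [MeasureTheory.integral_const_mul, int_r_exp]
    ring
  rw [hlhs] at hle
  calc ‖g 0‖^2 * π' ≤ _ := hle
    _ = ∫ w : ℂ, Fg w := by rw [← hswap, hfull]


theorem fockNorm_nonneg (f : ℂ → ℂ) : 0 ≤ fockNorm f := Real.sqrt_nonneg _

theorem pointEval (f : ℂ → ℂ) (hf : MemFock f) (z : ℂ) :
    ‖f z‖ ≤ Real.exp (‖z‖^2/2) * fockNorm f := by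
  set g : ℂ → ℂ := fun w => f (z + w) * Complex.exp (-(starRingEnd ℂ z * w)) with hg
  have hgd : Differentiable ℂ g := by
    apply Differentiable.mul
    · exact hf.1.comp (differentiable_const _ |>.add differentiable_id)
    · exact Complex.differentiable_exp.comp ((differentiable_const _ |>.mul differentiable_id).neg)
  have key : ∀ w : ℂ, ‖g w‖^2 * Real.exp (-‖w‖^2)
      = Real.exp (‖z‖^2) * (‖f (z+w)‖^2 * Real.exp (-‖z+w‖^2)) := by
    intro w
    have hre : (starRingEnd ℂ z * w).re = (z * starRingEnd ℂ w).re := by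
      have : z * starRingEnd ℂ w = starRingEnd ℂ (starRingEnd ℂ z * w) := by
        rw [map_mul, RingHomCompTriple.comp_apply]
        simp [mul_comm]
      rw [this, Complex.conj_re]
    have hnorm : ‖z+w‖^2 = ‖z‖^2 + 2*(starRingEnd ℂ z * w).re + ‖w‖^2 := by
      rw [hre]
      simp only [Complex.sq_norm]
      rw [Complex.normSq_add]
      ring
    have hge : ‖g w‖^2 = ‖f (z+w)‖^2 * Real.exp (-(2*(starRingEnd ℂ z * w).re)) := by
      rw [hg]
      simp only [norm_mul, mul_pow, Complex.norm_exp]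
      rw [← Real.exp_nat_mul]
      norm_num
      left
      ring_nf
    rw [hge, hnorm, mul_assoc, ← Real.exp_add, mul_comm (Real.exp (‖z‖^2)), mul_assoc,
      ← Real.exp_add]
    congr 2
    ring
  have htrans : Integrable (fun w : ℂ => ‖f (z+w)‖^2 * Real.exp (-‖z+w‖^2)) := by
    have := hf.2
    exact (MeasureTheory.measurePreserving_add_left volume z).integrable_comp_emb
      (MeasurableEquiv.addLeft z).measurableEmbedding |>.mpr this
  have hgI : Integrable (fun w : ℂ => ‖g w‖^2 * Real.exp (-‖w‖^2)) := by
    refine (htrans.const_mul (Real.exp (‖z‖^2))).congr ?_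
    exact Filter.Eventually.of_forall fun w => (key w).symm
  have hig : (∫ w : ℂ, ‖g w‖^2 * Real.exp (-‖w‖^2))
      = Real.exp (‖z‖^2) * ∫ w : ℂ, ‖f w‖^2 * Real.exp (-‖w‖^2) := by
    simp_rw [key]
    rw [MeasureTheory.integral_const_mul]
    congr 1
    exact integral_add_left_eq_self (fun w : ℂ => ‖f w‖^2 * Real.exp (-‖w‖^2)) z
  have h0 := pointEval_zero g hgd hgI
  have hg0 : g 0 = f z := by simp [hg]
  rw [hg0, hig] at h0
  -- now ‖f z‖^2 * π ≤ exp(‖z‖²) * ∫ Ff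
  have hInn : 0 ≤ ∫ w : ℂ, ‖f w‖^2 * Real.exp (-‖w‖^2) :=
    integral_nonneg fun w => by positivity
  have hfn : fockNorm f ^ 2 = (1/Real.pi) * ∫ w : ℂ, ‖f w‖^2 * Real.exp (-‖w‖^2) := by
    rw [fockNorm, Real.sq_sqrt]
    exact mul_nonneg (by positivity) hInn
  have hsq : ‖f z‖^2 ≤ (Real.exp (‖z‖^2/2) * fockNorm f)^2 := by
    rw [mul_pow, ← Real.exp_nat_mul, hfn]
    have hπ : (0:ℝ) < Real.pi := Real.pi_pos
    rw [show ((2:ℕ):ℝ) * (‖z‖^2/2) = ‖z‖^2 by push_cast; ring]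
    rw [← mul_le_mul_iff_of_pos_right hπ]
    calc ‖f z‖^2 * Real.pi ≤ Real.exp (‖z‖^2) * ∫ w : ℂ, ‖f w‖^2 * Real.exp (-‖w‖^2) := h0
      _ = Real.exp (‖z‖^2) * ((1/Real.pi) * (∫ w : ℂ, ‖f w‖^2 * Real.exp (-‖w‖^2))) * Real.pi := by
          field_simp
  calc ‖f z‖ = Real.sqrt (‖f z‖^2) := (Real.sqrt_sq (norm_nonneg _)).symm
    _ ≤ Real.sqrt ((Real.exp (‖z‖^2/2) * fockNorm f)^2) := Real.sqrt_le_sqrt hsq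
    _ = Real.exp (‖z‖^2/2) * fockNorm f := Real.sqrt_sq (mul_nonneg (Real.exp_nonneg _) (fockNorm_nonneg f))



theorem fock_derivative_bound (f : ℂ → ℂ) (hf : MemFock f) (k : ℕ) (z : ℂ) :
    ‖iteratedDeriv k f z‖ ≤
      Real.exp (k * (k + 1)) * (1 + ‖z‖) ^ k * Real.exp (‖z‖ ^ 2 / 2) * fockNorm f := by
  induction k generalizing z with
  | zero => simpa using pointEval f hf z
  | succ k ih =>
    have hN : 0 ≤ fockNorm f := fockNorm_nonneg f
    have hdk : Differentiable ℂ (iteratedDeriv k f) := by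
      have hcd : ContDiff ℂ ((k+1 : ℕ) : WithTop ℕ∞) f := hf.1.contDiff
      exact hcd.differentiable_iteratedDeriv k (by exact_mod_cast Nat.lt_succ_self k)
    have hz1 : (0:ℝ) < 1 + ‖z‖ := by positivity
    set r : ℝ := 1 / (1 + ‖z‖) with hrdef
    have hr : 0 < r := by positivity
    have hr1 : r ≤ 1 := by
      rw [hrdef, div_le_one hz1]; linarith [norm_nonneg z]
    have hrz : r * (1 + ‖z‖) = 1 := by
      rw [hrdef]; field_simp
    set C : ℝ := Real.exp (k*(k+1)) * (2^k * (1 + ‖z‖)^k) *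
        (Real.exp (3/2) * Real.exp (‖z‖^2/2)) * fockNorm f with hCdef
    have hC : ∀ w ∈ sphere z r, ‖iteratedDeriv k f w‖ ≤ C := by
      intro w hw
      have hwz : ‖w - z‖ = r := mem_sphere_iff_norm.mp hw
      have hwle : ‖w‖ ≤ ‖z‖ + r := by
        calc ‖w‖ = ‖z + (w - z)‖ := by ring_nf
          _ ≤ ‖z‖ + ‖w - z‖ := norm_add_le _ _
          _ = ‖z‖ + r := by rw [hwz]
      have h1w : (1 + ‖w‖)^k ≤ 2^k * (1 + ‖z‖)^k := by
        rw [← mul_pow]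
        refine pow_le_pow_left₀ (by positivity) ?_ k
        nlinarith [norm_nonneg z, norm_nonneg w]
      have h2w : Real.exp (‖w‖^2/2) ≤ Real.exp (3/2) * Real.exp (‖z‖^2/2) := by
        rw [← Real.exp_add]
        refine Real.exp_le_exp.mpr ?_
        have hsq : ‖w‖^2 ≤ ‖z‖^2 + 3 := by
          nlinarith [mul_self_le_mul_self (norm_nonneg w) hwle, norm_nonneg z, hr.le]
        linarith
      calc ‖iteratedDeriv k f w‖
          ≤ Real.exp (k*(k+1)) * (1 + ‖w‖)^k * Real.exp (‖w‖^2/2) * fockNorm f := ih w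
        _ ≤ C := by
            rw [hCdef]
            have e1 : (0:ℝ) ≤ Real.exp (k*(k+1)) := Real.exp_nonneg _
            have key := mul_le_mul (mul_le_mul_of_nonneg_left h1w e1) h2w
              (Real.exp_nonneg _) (by positivity)
            exact mul_le_mul_of_nonneg_right key hN
    have hder := norm_deriv_le_of_forall_mem_sphere_norm_le hr hdk.diffContOnCl hC
    rw [iteratedDeriv_succ]
    have hCr : C / r = C * (1 + ‖z‖) := by
      rw [hrdef, one_div]; field_simp
    have h2k : (2:ℝ)^k ≤ Real.exp k := by
      calc (2:ℝ)^k ≤ (Real.exp 1)^k :=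
            pow_le_pow_left₀ (by norm_num) (by linarith [Real.add_one_le_exp 1]) k
        _ = Real.exp k := by
            rw [← Real.exp_nat_mul]; norm_num
    have hcoef : Real.exp (k*(k+1)) * (2^k * Real.exp (3/2))
        ≤ Real.exp ((k+1:ℕ) * ((k+1:ℕ) + 1)) := by
      calc Real.exp (k*(k+1)) * (2^k * Real.exp (3/2))
          ≤ Real.exp (k*(k+1)) * (Real.exp k * Real.exp (3/2)) := by
            refine mul_le_mul_of_nonneg_left ?_ (Real.exp_nonneg _)
            exact mul_le_mul_of_nonneg_right h2k (Real.exp_nonneg _)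
        _ = Real.exp (k*(k+1) + k + 3/2) := by
            rw [← Real.exp_add, ← Real.exp_add, add_assoc]
        _ ≤ Real.exp ((k+1:ℕ) * ((k+1:ℕ) + 1)) := by
            refine Real.exp_le_exp.mpr ?_
            push_cast
            nlinarith [Nat.cast_nonneg (α := ℝ) k]
    have hfact : (0:ℝ) ≤ (1 + ‖z‖)^(k+1) * (Real.exp (‖z‖^2/2) * fockNorm f) :=
      mul_nonneg (by positivity) (mul_nonneg (Real.exp_nonneg _) hN)
    calc ‖deriv (iteratedDeriv k f) z‖ ≤ C / r := hder
      _ = C * (1 + ‖z‖) := hCr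
      _ = (Real.exp (k*(k+1)) * (2^k * Real.exp (3/2))) *
            ((1 + ‖z‖)^(k+1) * (Real.exp (‖z‖^2/2) * fockNorm f)) := by
          rw [hCdef]; ring
      _ ≤ Real.exp ((k+1:ℕ) * ((k+1:ℕ) + 1)) *
            ((1 + ‖z‖)^(k+1) * (Real.exp (‖z‖^2/2) * fockNorm f)) :=
          mul_le_mul_of_nonneg_right hcoef hfact
      _ = Real.exp ((k+1:ℕ) * ((k+1:ℕ) + 1)) * (1 + ‖z‖)^(k+1) *
            Real.exp (‖z‖^2/2) * fockNorm f := by ring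

end helpers
end

section
/- Let a, b, c be complex numbers with |a| = 1, \bar{a}b + \bar{b} = 0, and |c|² e^{|b|²} = 1. Then the map C_{a,b,c} defined by (C_{a,b,c} f)(z) = c e^{bz} \overline{f(\overline{az+b})} is an involution on the Fock space F²(ℂ): C_{a,b,c}(C_{a,b,c} f) = f for all f ∈ F²(ℂ). -/
open MeasureTheory Complex Finset

/-- The weighted composition conjugation `C_{a,b,c}`. -/
noncomputable def fockConj (a b c : ℂ) (f : ℂ → ℂ) : ℂ → ℂ :=
  fun z => c * Complex.exp (b * z) * (starRingEnd ℂ) (f ((starRingEnd ℂ) (a * z + b)))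

theorem fockConj_involutive (a b c : ℂ)
    (ha : ‖a‖ = 1) (hab : (starRingEnd ℂ) a * b + (starRingEnd ℂ) b = 0)
    (hc : (‖c‖) ^ 2 * Real.exp ((‖b‖) ^ 2) = 1)
    (f : ℂ → ℂ) (hf : MemFock f) :
    ∀ z : ℂ, fockConj a b c (fockConj a b c f) z = f z := by
  intro z
  have ha2 : (starRingEnd ℂ) a * a = 1 := by
    rw [mul_comm, Complex.mul_conj]
    rw [Complex.normSq_eq_norm_sq, ha]; norm_num
  have hba : (starRingEnd ℂ) b * a = -b := by
    have h := congrArg (starRingEnd ℂ) hab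
    simp only [map_add, map_mul, Complex.conj_conj, map_zero] at h
    linear_combination h
  have harg : (starRingEnd ℂ) a * (a * z + b) + (starRingEnd ℂ) b = z := by
    linear_combination z * ha2 + hab
  have hcc : c * (starRingEnd ℂ) c = ((‖c‖ : ℝ) : ℂ) ^ 2 := by
    rw [Complex.mul_conj, Complex.normSq_eq_norm_sq]; push_cast; ring
  have hbb : (starRingEnd ℂ) b * b = ((‖b‖ : ℝ) : ℂ) ^ 2 := by
    rw [mul_comm, Complex.mul_conj, Complex.normSq_eq_norm_sq]; push_cast; ring
  have hexp : Complex.exp (b * z) * Complex.exp ((starRingEnd ℂ) b * (a * z + b))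
      = Complex.exp (((‖b‖ : ℝ) : ℂ) ^ 2) := by
    rw [← Complex.exp_add]
    congr 1
    linear_combination z * hba + hbb
  simp only [fockConj, map_mul, map_add, Complex.conj_conj, ← Complex.exp_conj, harg]
  calc c * Complex.exp (b * z) *
        ((starRingEnd ℂ) c * Complex.exp ((starRingEnd ℂ) b * (a * z + b)) * f z)
      = (c * (starRingEnd ℂ) c) *
        (Complex.exp (b * z) * Complex.exp ((starRingEnd ℂ) b * (a * z + b))) * f z := by ring
    _ = f z := by
        rw [hcc, hexp, show ((‖b‖ : ℝ) : ℂ) ^ 2 = ((‖b‖ ^ 2 : ℝ) : ℂ) by push_cast; ring,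
          ← Complex.ofReal_exp, ← Complex.ofReal_pow, ← Complex.ofReal_mul, hc]
        simp
end

section
/- Let a, b, c be complex numbers with |a| = 1, \bar{a}b + \bar{b} = 0, and |c|² e^{|b|²} = 1. Then the anti-linear map C_{a,b,c} given by (C_{a,b,c}f)(z) = c e^{bz} \overline{f(\overline{az+b})} is isometric on F²(ℂ): ‖C_{a,b,c}f‖ = ‖f‖ for all f ∈ F²(ℂ). -/
open MeasureTheory Complex Finset

private theorem fockConj_integral_eq (a b c : ℂ)
    (ha : ‖a‖ = 1) (hab : (starRingEnd ℂ) a * b + (starRingEnd ℂ) b = 0)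
    (hc : (‖c‖) ^ 2 * Real.exp ((‖b‖) ^ 2) = 1)
    (f : ℂ → ℂ) :
    (∫ z : ℂ, ‖c * Complex.exp (b * z) * (starRingEnd ℂ) (f ((starRingEnd ℂ) (a * z + b)))‖ ^ 2 * Real.exp (-‖z‖ ^ 2)) = ∫ z : ℂ, ‖f z‖ ^ 2 * Real.exp (-‖z‖ ^ 2) := by
  set A : Circle := ⟨a, mem_sphere_zero_iff_norm.2 (by exact ha)⟩ with hA
  set T : ℂ → ℂ := fun z => (starRingEnd ℂ) (a * z + b) with hT
  have hTe : T = fun z => conjLIE ((rotation A) z + b) := by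
    funext z; simp only [hT]; rfl
  have hmp : MeasurePreserving T volume volume := by
    rw [hTe]
    exact (conjLIE.measurePreserving).comp
      ((measurePreserving_add_right volume b).comp (rotation A).measurePreserving)
  have hiso : Isometry T := Isometry.of_dist_eq fun x y => by
    have h1 : (starRingEnd ℂ) (a*x+b) - (starRingEnd ℂ) (a*y+b) = (starRingEnd ℂ) (a*(x-y)) := by
      rw [← map_sub]; ring_nf
    rw [hT]
    simp only [Complex.dist_eq, h1, map_mul, norm_mul, Complex.norm_conj, ha, one_mul]
  have hme : MeasurableEmbedding T := hiso.isClosedEmbedding.measurableEmbedding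
  have haa : a * (starRingEnd ℂ) a = 1 := by
    rw [Complex.mul_conj, Complex.normSq_eq_norm_sq, ha]; norm_num
  have hconjb : a * (starRingEnd ℂ) b = -b := by
    have hcb : (starRingEnd ℂ) b = -((starRingEnd ℂ) a * b) := by linear_combination hab
    rw [hcb]; linear_combination (-b) * haa
  have hTz : ∀ z : ℂ, ‖T z‖ ^ 2 = ‖z‖ ^ 2 - 2 * (b * z).re + ‖b‖ ^ 2 := by
    intro z
    rw [hT]
    simp only [Complex.norm_conj, Complex.sq_norm, Complex.normSq_add,
      map_mul, Complex.normSq_mul]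
    have h2 : (a * z * (starRingEnd ℂ) b).re = -(b * z).re := by
      have : a * z * (starRingEnd ℂ) b = -(b * z) := by linear_combination z * hconjb
      rw [this, Complex.neg_re]
    rw [h2]
    have h3 : Complex.normSq a = 1 := by rw [Complex.normSq_eq_norm_sq, ha]; norm_num
    rw [h3]; ring
  have hcsq : ‖c‖ ^ 2 = Real.exp (-(‖b‖ ^ 2)) := by
    rw [Real.exp_neg]
    have hne := Real.exp_ne_zero ((‖b‖) ^ 2)
    field_simp
    linarith [hc]
  have hpt : ∀ z : ℂ,
      ‖c * Complex.exp (b * z) * (starRingEnd ℂ) (f (T z))‖ ^ 2 * Real.exp (-‖z‖ ^ 2)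
        = ‖f (T z)‖ ^ 2 * Real.exp (-‖T z‖ ^ 2) := by
    intro z
    rw [norm_mul, norm_mul, RCLike.norm_conj, hTz z]
    rw [Complex.norm_exp]
    rw [mul_pow, mul_pow, hcsq, ← Real.exp_nat_mul]
    rw [show -(‖z‖ ^ 2 - 2 * (b * z).re + ‖b‖ ^ 2) = -(‖b‖^2) + (2:ℕ) * (b*z).re + -‖z‖^2 by ring]
    rw [Real.exp_add, Real.exp_add]
    ring
  calc (∫ z : ℂ, ‖c * Complex.exp (b * z) * (starRingEnd ℂ) (f ((starRingEnd ℂ) (a * z + b)))‖ ^ 2 * Real.exp (-‖z‖ ^ 2))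
      = ∫ z : ℂ, ‖f (T z)‖ ^ 2 * Real.exp (-‖T z‖ ^ 2) := by
        refine integral_congr_ae (Filter.Eventually.of_forall fun z => ?_)
        exact hpt z
    _ = ∫ z : ℂ, ‖f z‖ ^ 2 * Real.exp (-‖z‖ ^ 2) :=
        hmp.integral_comp hme (fun z => ‖f z‖ ^ 2 * Real.exp (-‖z‖ ^ 2))

theorem fockConj_isometric (a b c : ℂ)
    (ha : ‖a‖ = 1) (hab : (starRingEnd ℂ) a * b + (starRingEnd ℂ) b = 0)
    (hc : (‖c‖) ^ 2 * Real.exp ((‖b‖) ^ 2) = 1)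
    (f : ℂ → ℂ) (hf : MemFock f) :
    fockNorm (fockConj a b c f) = fockNorm f := by
  unfold fockNorm fockConj
  rw [fockConj_integral_eq a b c ha hab hc f]
end

section
/- Suppose entire functions ψ₀, ..., ψ_κ satisfy Σ_{j=0}^κ ψ_j(u) \bar{z}^j = Σ_{j=0}^κ \overline{ψ_j(z)} u^j for all z, u ∈ ℂ. Then each ψ_p is a polynomial of degree at most κ, ψ_p(u) = Σ_{j=0}^κ d_{j,p} u^j, with coefficients satisfying d_{j,p} = \overline{d_{p,j}}. -/
/-!
Evaluating the identity at `z = 0, 1, …, κ` gives, for each `u`, a Vandermonde system in the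
values `ψ_j u` whose right-hand sides are polynomials of degree at most `κ` in `u`; inverting it
(by Lagrange interpolation) writes every `ψ_p` as such a polynomial. Substituting these back, the
identity becomes an equality of two polynomial functions of `(u, z̄)`, and comparing coefficients
gives `d j p = conj (d p j)`.
-/

open Complex Finset

open Polynomial ComplexConjugate

theorem exists_coeff_eq_sum_mul_eval_natCast (K : Type*) [Field K] [CharZero K] (n : ℕ) :
    ∃ W : ℕ → ℕ → K, ∀ (x : ℕ → K), ∀ j < n,
      x j = ∑ i ∈ range n, W j i * ∑ k ∈ range n, x k * (i : K) ^ k := by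
  refine ⟨fun j i => (Lagrange.basis (range n) (fun i : ℕ => (i : K)) i).coeff j, fun x j hj => ?_⟩
  let f : K[X] := ∑ k ∈ range n, C (x k) * X ^ k
  have hdeg : f.degree < #(range n) := by
    rw [card_range, ← mem_degreeLT]
    exact Submodule.sum_mem _ fun k hk =>
      mem_degreeLT.2 ((degree_C_mul_X_pow_le _ _).trans_lt (by exact_mod_cast mem_range.1 hk))
  have hcoeff : f.coeff j = x j := by simp [f, finsetSum_coeff, hj]
  have heval (a : K) : f.eval a = ∑ k ∈ range n, x k * a ^ k := by simp [f, eval_finsetSum]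
  have hinj : Set.InjOn (fun i : ℕ => (i : K)) (range n) := fun _ _ _ _ h => Nat.cast_injective h
  have hinterp := congrArg (coeff · j) (Lagrange.eq_interpolate hinj hdeg)
  simp only [Lagrange.interpolate_apply, finsetSum_coeff, coeff_C_mul, hcoeff, heval] at hinterp
  rw [hinterp]
  exact sum_congr rfl fun _ _ => mul_comm _ _

section

variable {K : Type*} [Field K] [CharZero K] {n : ℕ}

theorem eq_of_forall_sum_mul_natCast_pow_eq {a b : ℕ → K}
    (h : ∀ i : ℕ, ∑ k ∈ range n, a k * (i : K) ^ k = ∑ k ∈ range n, b k * (i : K) ^ k) :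
    ∀ j < n, a j = b j := by
  obtain ⟨W, hW⟩ := exists_coeff_eq_sum_mul_eval_natCast K n
  intro j hj
  rw [hW a j hj, hW b j hj]
  simp only [h]

theorem eq_of_forall_sum_sum_mul_pow_mul_pow_eq {a b : ℕ → ℕ → K}
    (h : ∀ u w : K, ∑ j ∈ range n, ∑ p ∈ range n, a j p * u ^ j * w ^ p =
      ∑ j ∈ range n, ∑ p ∈ range n, b j p * u ^ j * w ^ p) :
    ∀ j < n, ∀ p < n, a j p = b j p := by
  have hrow (w : K) : ∀ j < n, ∑ p ∈ range n, a j p * w ^ p = ∑ p ∈ range n, b j p * w ^ p :=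
    eq_of_forall_sum_mul_natCast_pow_eq fun i => by
      simpa only [sum_mul, mul_right_comm] using h i w
  intro j hj
  exact eq_of_forall_sum_mul_natCast_pow_eq fun i => hrow i j hj

theorem exists_coeff_of_forall_sum_mul_natCast_pow_eq {α : Type*} {m : ℕ} (c e : ℕ → α → K)
    (a : ℕ → ℕ → K)
    (h : ∀ (i : ℕ) u, ∑ k ∈ range n, c k u * (i : K) ^ k = ∑ j ∈ range m, a i j * e j u) :
    ∃ d : ℕ → ℕ → K, ∀ p < n, ∀ u, c p u = ∑ j ∈ range m, d j p * e j u := by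
  obtain ⟨W, hW⟩ := exists_coeff_eq_sum_mul_eval_natCast K n
  refine ⟨fun j p => ∑ i ∈ range n, W p i * a i j, fun p hp u => ?_⟩
  rw [hW (c · u) p hp]
  simp only [h, mul_sum, sum_mul, mul_assoc]
  exact sum_comm

end

theorem symbols_polynomial_selfadjoint_general (κ : ℕ) (ψ : ℕ → ℂ → ℂ)
    (hid : ∀ z u : ℂ, ∑ j ∈ Finset.range (κ + 1), ψ j u * ((starRingEnd ℂ) z) ^ j =
      ∑ j ∈ Finset.range (κ + 1), (starRingEnd ℂ) (ψ j z) * u ^ j) :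
    ∃ d : ℕ → ℕ → ℂ,
      (∀ j p, j ≤ κ → p ≤ κ → d j p = (starRingEnd ℂ) (d p j)) ∧
      ∀ p ≤ κ, ∀ u : ℂ, ψ p u = ∑ j ∈ Finset.range (κ + 1), d j p * u ^ j := by
  obtain ⟨d, hd⟩ := exists_coeff_of_forall_sum_mul_natCast_pow_eq ψ (fun j u => u ^ j)
    (fun i j => conj (ψ j i)) fun i u => by simpa only [map_natCast] using hid i u
  have hpoly (p : ℕ) (hp : p ∈ range (κ + 1)) := hd p (mem_range.1 hp)
  refine ⟨d, fun j p hj hp => ?_, fun p hp => hd p (Nat.lt_succ_of_le hp)⟩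
  refine eq_of_forall_sum_sum_mul_pow_mul_pow_eq (n := κ + 1) (a := d)
    (b := fun j p => conj (d p j)) (fun u w => ?_) j (Nat.lt_succ_of_le hj) p (Nat.lt_succ_of_le hp)
  have h := hid (conj w) u
  simp +contextual only [hpoly, map_sum, map_mul, map_pow, conj_conj, sum_mul] at h
  rw [sum_comm, h]
  exact sum_congr rfl fun _ _ => sum_congr rfl fun _ _ => mul_right_comm _ _ _

theorem symbols_polynomial_selfadjoint (κ : ℕ) (ψ : ℕ → ℂ → ℂ)
    (hψ : ∀ j ≤ κ, Differentiable ℂ (ψ j))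
    (hid : ∀ z u : ℂ, ∑ j ∈ Finset.range (κ + 1), ψ j u * ((starRingEnd ℂ) z) ^ j =
      ∑ j ∈ Finset.range (κ + 1), (starRingEnd ℂ) (ψ j z) * u ^ j) :
    ∃ d : ℕ → ℕ → ℂ,
      (∀ j p, j ≤ κ → p ≤ κ → d j p = (starRingEnd ℂ) (d p j)) ∧
      ∀ p ≤ κ, ∀ u : ℂ, ψ p u = ∑ j ∈ Finset.range (κ + 1), d j p * u ^ j :=
  symbols_polynomial_selfadjoint_general κ ψ hid
end

section
/- Let V be a linear operator on the Fock space with Vf = ψ₀ f + ψₙ f^{(n)} for f in its domain, where ψ₀, ψₙ are entire and ψₙ has a zero of order exactly n at a point w. Then every eigenvalue λ of V satisfies λ = ψ₀(w) or λ = ψ₀(w) + C(k,n) ψₙ^{(n)}(w) for some integer k ≥ n, where C(k,n) is the binomial coefficient. -/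
open Finset

lemma entire_deriv {f : ℂ → ℂ} (hf : Differentiable ℂ f) : Differentiable ℂ (deriv f) :=
  (contDiff_infty_iff_deriv.mp (hf.contDiff)).2.differentiable (by simp)

lemma entire_iteratedDeriv {f : ℂ → ℂ} (hf : Differentiable ℂ f) (k : ℕ) :
    Differentiable ℂ (iteratedDeriv k f) := by
  induction k generalizing f with
  | zero => simpa using hf
  | succ k ih => rw [iteratedDeriv_succ']; exact ih (entire_deriv hf)

lemma entire_iteratedDeriv_add {f g : ℂ → ℂ} (hf : Differentiable ℂ f)
    (hg : Differentiable ℂ g) (m : ℕ) (z : ℂ) :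
    iteratedDeriv m (fun z => f z + g z) z = iteratedDeriv m f z + iteratedDeriv m g z := by
  show iteratedDeriv m (f + g) z = _
  simp_rw [← iteratedDerivWithin_univ]
  exact iteratedDerivWithin_add (Set.mem_univ z) uniqueDiffOn_univ
    hf.contDiff.contDiffWithinAt hg.contDiff.contDiffWithinAt

lemma entire_leibniz {f g : ℂ → ℂ} (hf : Differentiable ℂ f) (hg : Differentiable ℂ g)
    (m : ℕ) (z : ℂ) :
    iteratedDeriv m (fun z => f z * g z) z =
      ∑ j ∈ range (m + 1),
        (m.choose j : ℂ) * iteratedDeriv j f z * iteratedDeriv (m - j) g z := by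
  induction m generalizing f g with
  | zero => simp
  | succ m ih =>
    have hd : deriv (fun z => f z * g z) = fun z => deriv f z * g z + f z * deriv g z := by
      funext y
      exact deriv_fun_mul (hf y) (hg y)
    rw [iteratedDeriv_succ', hd,
      entire_iteratedDeriv_add (f := fun z => deriv f z * g z) (g := fun z => f z * deriv g z) ((entire_deriv hf).mul hg) (hf.mul (entire_deriv hg)) m z,
      ih (entire_deriv hf) hg, ih hf (entire_deriv hg)]
    have e1 : ∀ j, iteratedDeriv j (deriv f) z = iteratedDeriv (j + 1) f z := fun j => by
      rw [← iteratedDeriv_succ']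
    have e2 : ∀ j, iteratedDeriv j (deriv g) z = iteratedDeriv (j + 1) g z := fun j => by
      rw [← iteratedDeriv_succ']
    -- second sum: ∑_{j≤m} C(m,j) f^{(j)} g^{(m-j+1)}
    -- = ∑_{j=0}^{m} ... peel j = 0, reindex the rest
    rw [Finset.sum_range_succ' _ (m + 1)]
    -- RHS now: ∑ j in range (m+1), C(m+1,j+1) f^{(j+1)} g^{(m+1-(j+1))} + C(m+1,0) f^{(0)} g^{(m+1)}
    simp_rw [e1, e2]
    have h2 : ∑ j ∈ range (m + 1),
        (m.choose j : ℂ) * iteratedDeriv j f z * iteratedDeriv (m - j + 1) g z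
        = (∑ j ∈ range (m + 1),
            (m.choose (j + 1) : ℂ) * iteratedDeriv (j + 1) f z
              * iteratedDeriv (m - (j + 1) + 1) g z)
          + (m.choose 0 : ℂ) * iteratedDeriv 0 f z * iteratedDeriv (m + 1) g z := by
      rw [Finset.sum_range_succ' _ m, Finset.sum_range_succ]
      simp [Nat.choose_succ_self]
    have hc : (m.choose 0 : ℂ) * iteratedDeriv 0 f z * iteratedDeriv (m + 1) g z
        = ((m+1).choose 0 : ℂ) * iteratedDeriv 0 f z * iteratedDeriv (m + 1 - 0) g z := by
      simp
    rw [h2, hc, ← add_assoc, ← Finset.sum_add_distrib]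
    congr 1
    apply Finset.sum_congr rfl
    intro j hj
    rw [Finset.mem_range] at hj
    have hcs : ((m+1).choose (j+1) : ℂ) = (m.choose j : ℂ) + (m.choose (j+1) : ℂ) := by
      rw [Nat.choose_succ_succ]; push_cast; ring
    have hms : m + 1 - (j + 1) = m - j := by omega
    rcases le_or_gt (j+1) m with h | h
    · have hsub : m - (j + 1) + 1 = m - j := by omega
      rw [hsub, hcs, hms]; ring
    · rw [hcs, hms, Nat.choose_eq_zero_of_lt h]; push_cast; ring

lemma iteratedDeriv_comp_iteratedDeriv (f : ℂ → ℂ) (m n : ℕ) :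
    iteratedDeriv m (iteratedDeriv n f) = iteratedDeriv (m + n) f := by
  induction m with
  | zero => simp
  | succ m ih => rw [iteratedDeriv_succ, ih, Nat.succ_add, iteratedDeriv_succ]

lemma entire_iteratedDeriv_const_mul {f : ℂ → ℂ} (hf : Differentiable ℂ f) (c : ℂ)
    (m : ℕ) (z : ℂ) :
    iteratedDeriv m (fun z => c * f z) z = c * iteratedDeriv m f z := by
  simp_rw [← iteratedDerivWithin_univ]
  exact iteratedDerivWithin_const_mul (Set.mem_univ z) uniqueDiffOn_univ c
    hf.contDiff.contDiffWithinAt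

open MeasureTheory Complex Finset

theorem eigenvalue_localization (n : ℕ) (hn : 1 ≤ n) (ψ₀ ψₙ : ℂ → ℂ) (w : ℂ)
    (hψ₀ : Differentiable ℂ ψ₀) (hψₙ : Differentiable ℂ ψₙ)
    (hzero : ∀ j < n, iteratedDeriv j ψₙ w = 0) (hord : iteratedDeriv n ψₙ w ≠ 0)
    (lam : ℂ) (f : ℂ → ℂ) (hf : MemFock f) (hf0 : f ≠ 0)
    (heig : ∀ z : ℂ, ψ₀ z * f z + ψₙ z * iteratedDeriv n f z = lam * f z) :
    lam = ψ₀ w ∨ ∃ k : ℕ, n ≤ k ∧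
      lam = ψ₀ w + (k.choose n : ℂ) * iteratedDeriv n ψₙ w := by
  obtain ⟨hfd, -⟩ := hf
  -- there is a minimal ℓ with f^{(ℓ)}(w) ≠ 0
  have hex : ∃ ℓ, iteratedDeriv ℓ f w ≠ 0 := by
    by_contra hcon
    push_neg at hcon
    apply hf0
    funext z
    rw [← Complex.taylorSeries_eq_of_entire' w z hfd]
    simp [hcon]
  classical
  set ℓ := Nat.find hex with hℓdef
  have hℓ : iteratedDeriv ℓ f w ≠ 0 := Nat.find_spec hex
  have hmin : ∀ j < ℓ, iteratedDeriv j f w = 0 := fun j hj => by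
    have := Nat.find_min hex hj
    simpa using this
  -- differentiate the eigenvalue equation ℓ times at w
  have hSnf : Differentiable ℂ (iteratedDeriv n f) := entire_iteratedDeriv hfd n
  have key : iteratedDeriv ℓ (fun z => ψ₀ z * f z + ψₙ z * iteratedDeriv n f z) w
      = iteratedDeriv ℓ (fun z => lam * f z) w := by
    congr 1
    funext z
    exact heig z
  rw [entire_iteratedDeriv_add (f := fun z => ψ₀ z * f z) (g := fun z => ψₙ z * iteratedDeriv n f z) (hψ₀.mul hfd) (hψₙ.mul hSnf) ℓ w,
    entire_leibniz hψ₀ hfd ℓ w, entire_leibniz hψₙ hSnf ℓ w,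
    entire_iteratedDeriv_const_mul hfd lam ℓ w] at key
  -- first sum collapses to ψ₀ w * f^{(ℓ)} w
  have hsum1 : ∑ j ∈ range (ℓ + 1),
      (ℓ.choose j : ℂ) * iteratedDeriv j ψ₀ w * iteratedDeriv (ℓ - j) f w
      = ψ₀ w * iteratedDeriv ℓ f w := by
    rw [Finset.sum_eq_single 0]
    · simp
    · intro j hj hj0
      rw [Finset.mem_range] at hj
      have : ℓ - j < ℓ := by omega
      rw [hmin _ this, mul_zero]
    · simp
  rw [hsum1] at key
  simp_rw [fun j => congrFun (iteratedDeriv_comp_iteratedDeriv f (ℓ - j) n) w] at key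
  by_cases hln : ℓ < n
  · -- all ψₙ derivatives of order ≤ ℓ < n vanish
    left
    have hsum2 : ∑ j ∈ range (ℓ + 1),
        (ℓ.choose j : ℂ) * iteratedDeriv j ψₙ w * iteratedDeriv (ℓ - j + n) f w = 0 := by
      apply Finset.sum_eq_zero
      intro j hj
      rw [Finset.mem_range] at hj
      rw [hzero j (by omega), mul_zero, zero_mul]
    rw [hsum2, add_zero] at key
    have hk : (ψ₀ w - lam) * iteratedDeriv ℓ f w = 0 := by
      linear_combination key
    rcases mul_eq_zero.mp hk with h | h
    · linear_combination -h
    · exact absurd h hℓ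
  · right
    push_neg at hln
    refine ⟨ℓ, hln, ?_⟩
    have hsum2 : ∑ j ∈ range (ℓ + 1),
        (ℓ.choose j : ℂ) * iteratedDeriv j ψₙ w * iteratedDeriv (ℓ - j + n) f w
        = (ℓ.choose n : ℂ) * iteratedDeriv n ψₙ w * iteratedDeriv ℓ f w := by
      rw [Finset.sum_eq_single n]
      · have h' : ℓ - n + n = ℓ := by omega
        rw [h']
      · intro j hj hjn
        rw [Finset.mem_range] at hj
        rcases lt_or_gt_of_ne hjn with h | h
        · rw [hzero j h, mul_zero, zero_mul]
        · have : ℓ - j + n < ℓ := by omega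
          rw [hmin _ this, mul_zero]
      · intro h
        rw [Finset.mem_range] at h
        omega
    rw [hsum2] at key
    have : (ψ₀ w + (ℓ.choose n : ℂ) * iteratedDeriv n ψₙ w - lam) * iteratedDeriv ℓ f w = 0 := by
      linear_combination key
    rcases mul_eq_zero.mp this with h | h
    · linear_combination -h
    · exact absurd h hℓ
end

section
/- Let T be a first-order differential operator Tf = ψ₀ f + ψ₁ f' on the Fock space, where ψ₁ has a simple zero at w (ψ₁(w) = 0, ψ₁'(w) ≠ 0). Then every eigenvalue λ of T satisfies λ = ψ₀(w) + k ψ₁'(w) for some k ∈ ℕ. -/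
open MeasureTheory Complex Finset Filter

theorem first_order_eigenvalue_localization (ψ₀ ψ₁ : ℂ → ℂ) (w : ℂ)
    (hψ₀ : Differentiable ℂ ψ₀) (hψ₁ : Differentiable ℂ ψ₁)
    (hzero : ψ₁ w = 0) (hsimple : deriv ψ₁ w ≠ 0)
    (lam : ℂ) (f : ℂ → ℂ) (hf : MemFock f) (hf0 : f ≠ 0)
    (heig : ∀ z : ℂ, ψ₀ z * f z + ψ₁ z * deriv f z = lam * f z) :
    ∃ k : ℕ, lam = ψ₀ w + (k : ℂ) * deriv ψ₁ w := by
  obtain ⟨hdiff, -⟩ := hf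
  have hfa : AnalyticOnNhd ℂ f Set.univ := analyticOnNhd_univ_iff_differentiable.2 hdiff
  have hfw : AnalyticAt ℂ f w := hfa w trivial
  have hord : analyticOrderAt f w ≠ ⊤ := by
    intro h
    rw [analyticOrderAt_eq_top] at h
    have := hfa.eqOn_zero_of_preconnected_of_eventuallyEq_zero isPreconnected_univ
      (Set.mem_univ w) h
    exact hf0 (funext fun z => this trivial)
  obtain ⟨n, hn⟩ := WithTop.ne_top_iff_exists.mp hord
  obtain ⟨g, hg, hgw, hfg⟩ := hfw.analyticOrderAt_eq_natCast.mp hn.symm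
  -- case n = 0
  rcases Nat.eq_zero_or_pos n with hn0 | hpos
  · refine ⟨0, ?_⟩
    have hfwne : f w ≠ 0 := by
      have := hfg.self_of_nhds
      simp [hn0] at this
      simpa [this] using hgw
    have := heig w
    rw [hzero] at this
    simp only [zero_mul, add_zero] at this
    have hlam := (mul_right_cancel₀ hfwne this.symm).symm
    simp [hlam]
  · obtain ⟨m, rfl⟩ : ∃ m, n = m + 1 := ⟨n - 1, (Nat.succ_pred_eq_of_pos hpos).symm⟩
    refine ⟨m + 1, ?_⟩
    have hgd : ∀ᶠ z in nhds w, DifferentiableAt ℂ g z :=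
      hg.eventually_analyticAt.mono fun z hz => hz.differentiableAt
    have hderiv : ∀ᶠ z in nhds w, deriv f z =
        ((m + 1 : ℕ) : ℂ) * (z - w) ^ m * g z + (z - w) ^ (m + 1) * deriv g z := by
      have h1 : deriv f =ᶠ[nhds w] deriv (fun z => (z - w) ^ (m + 1) * g z) := by
        apply Filter.EventuallyEq.deriv
        filter_upwards [hfg] with z hz
        simpa [smul_eq_mul] using hz
      filter_upwards [h1, hgd] with z h1z hzd
      rw [h1z]
      have hd1 : DifferentiableAt ℂ (fun z => (z - w) ^ (m + 1)) z := by fun_prop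
      rw [deriv_fun_mul hd1 hzd]
      have hpw : deriv (fun z => (z - w) ^ (m + 1)) z
          = ((m + 1 : ℕ) : ℂ) * (z - w) ^ m := by
        have := (((hasDerivAt_id z).sub_const w).pow (m + 1)).deriv
        simpa using this
      rw [hpw]
    have key : ∀ᶠ z in nhdsWithin w {w}ᶜ,
        ψ₀ z * g z + slope ψ₁ w z * (((m + 1 : ℕ) : ℂ) * g z + (z - w) * deriv g z)
          = lam * g z := by
      filter_upwards [nhdsWithin_le_nhds hfg, nhdsWithin_le_nhds hderiv,
        self_mem_nhdsWithin] with z hz hdz hzw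
      have hzw' : z - w ≠ 0 := sub_ne_zero.mpr hzw
      have he := heig z
      rw [hz, hdz, smul_eq_mul] at he
      rw [slope_def_field, hzero, sub_zero]
      have hcancel : (z - w) ^ (m + 1) ≠ 0 := pow_ne_zero _ hzw'
      apply mul_right_cancel₀ hcancel
      have hdiv : ψ₁ z / (z - w) * (z - w) = ψ₁ z := div_mul_cancel₀ _ hzw'
      push_cast at he ⊢
      linear_combination he + ((((m : ℂ) + 1) * g z + (z - w) * deriv g z) * (z - w) ^ m) * hdiv
    have hslope : Filter.Tendsto (slope ψ₁ w) (nhdsWithin w {w}ᶜ) (nhds (deriv ψ₁ w)) :=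
      hasDerivAt_iff_tendsto_slope.mp (hψ₁ w).hasDerivAt
    have hgc : Filter.Tendsto g (nhdsWithin w {w}ᶜ) (nhds (g w)) :=
      hg.continuousAt.continuousWithinAt.tendsto
    have hgdc : Filter.Tendsto (deriv g) (nhdsWithin w {w}ᶜ) (nhds (deriv g w)) := by
      have h1 : ContinuousAt (fderiv ℂ g) w := hg.fderiv.continuousAt
      have h2 : ContinuousAt (fun z => fderiv ℂ g z 1) w :=
        ((ContinuousLinearMap.apply ℂ ℂ (1 : ℂ)).continuous.continuousAt).comp h1
      exact h2.continuousWithinAt.tendsto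
    have hψ₀c : Filter.Tendsto ψ₀ (nhdsWithin w {w}ᶜ) (nhds (ψ₀ w)) :=
      (hψ₀ w).continuousAt.continuousWithinAt.tendsto
    have hsub : Filter.Tendsto (fun z => z - w) (nhdsWithin w {w}ᶜ) (nhds 0) := by
      have : Filter.Tendsto (fun z : ℂ => z - w) (nhds w) (nhds (w - w)) :=
        (continuous_id.sub continuous_const).tendsto w
      simpa using this.mono_left nhdsWithin_le_nhds
    have hL : Filter.Tendsto
        (fun z => ψ₀ z * g z + slope ψ₁ w z * (((m + 1 : ℕ) : ℂ) * g z + (z - w) * deriv g z))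
        (nhdsWithin w {w}ᶜ)
        (nhds (ψ₀ w * g w + deriv ψ₁ w * (((m + 1 : ℕ) : ℂ) * g w + 0 * deriv g w))) :=
      (hψ₀c.mul hgc).add (hslope.mul ((tendsto_const_nhds.mul hgc).add (hsub.mul hgdc)))
    have hR : Filter.Tendsto (fun z => lam * g z) (nhdsWithin w {w}ᶜ) (nhds (lam * g w)) :=
      tendsto_const_nhds.mul hgc
    have heq : ψ₀ w * g w + deriv ψ₁ w * (((m + 1 : ℕ) : ℂ) * g w + 0 * deriv g w)
        = lam * g w :=
      tendsto_nhds_unique (hL.congr' key) hR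
    have hfin : (ψ₀ w + ((m + 1 : ℕ) : ℂ) * deriv ψ₁ w) * g w = lam * g w := by
      rw [← heq]; ring
    exact (mul_right_cancel₀ hgw hfin).symm
end

section
/- Let A, B, C ∈ ℂ with C ≠ 0 and |A| < |C|. Then for every ζ ∈ ℂ, the function g(z) = exp(−Az²/(2C) − (B−ζ)z/C) lies in the Fock space F²(ℂ) and satisfies (Az + B) g(z) + C g'(z) = ζ g(z) for all z; consequently the point spectrum of the maximal operator f ↦ (Az+B)f + Cf' on F²(ℂ) is all of ℂ. -/
open MeasureTheory Complex Finset

/-! Solving the first-order equation `(Az + B) g + C g' = ζ g` gives the Gaussian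
`g(z) = exp(-A z² / (2C) - (B - ζ) z / C)`. Since `|z²| = |z|²`, the weighted square
`|g(z)|² e^{-|z|²}` is bounded by `exp(c |z| - (1 - |A|/|C|) |z|²)`, which is integrable when
`|A| < |C|`: a Gaussian dominates the exponential of any linear function of `|z|`. -/

section Gaussian

variable {V : Type*} [NormedAddCommGroup V] [InnerProductSpace ℝ V] [FiniteDimensional ℝ V]
  [MeasurableSpace V] [BorelSpace V]

theorem integrable_rexp_neg_mul_sq_norm {ε : ℝ} (hε : 0 < ε) :
    Integrable (fun v : V => Real.exp (-ε * ‖v‖ ^ 2)) := by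
  simpa [Complex.norm_exp, ← Complex.ofReal_pow] using
    (GaussianFourier.integrable_cexp_neg_mul_sq_norm_add (b := (ε : ℂ))
      (by simpa using hε) 0 (0 : V)).norm

theorem integrable_rexp_mul_norm_sub_mul_sq_norm (c : ℝ) {ε : ℝ} (hε : 0 < ε) :
    Integrable (fun v : V => Real.exp (c * ‖v‖ - ε * ‖v‖ ^ 2)) := by
  refine ((integrable_rexp_neg_mul_sq_norm (half_pos hε)).const_mul
    (Real.exp (c ^ 2 / (2 * ε)))).mono' (by fun_prop) (Filter.Eventually.of_forall fun v => ?_)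
  -- completing the square: `c r - ε r² = c² / (2ε) - (ε / 2) r² - (ε / 2) (r - c / ε)²`
  have hsq : c * ‖v‖ - ε * ‖v‖ ^ 2 ≤ c ^ 2 / (2 * ε) + -(ε / 2) * ‖v‖ ^ 2 := by
    have h := sq_nonneg (ε * ‖v‖ - c)
    rw [div_add' _ _ _ (by positivity), le_div_iff₀ (by positivity)]
    nlinarith
  rw [Real.norm_of_nonneg (Real.exp_pos _).le, ← Real.exp_add]
  exact Real.exp_le_exp.mpr hsq

end Gaussian

theorem MemFock.const_mul {f : ℂ → ℂ} (hf : MemFock f) (c : ℂ) :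
    MemFock (fun z => c * f z) := by
  refine ⟨hf.1.const_mul c, (hf.2.const_mul (‖c‖ ^ 2)).congr (Filter.Eventually.of_forall
    fun z => ?_)⟩
  simp only [norm_mul, mul_pow, mul_assoc]

theorem re_quadratic_le (a b z : ℂ) :
    (a * z ^ 2 + b * z).re ≤ ‖a‖ * ‖z‖ ^ 2 + ‖b‖ * ‖z‖ :=
  calc (a * z ^ 2 + b * z).re ≤ ‖a * z ^ 2 + b * z‖ := re_le_norm _
    _ ≤ ‖a * z ^ 2‖ + ‖b * z‖ := norm_add_le _ _
    _ = ‖a‖ * ‖z‖ ^ 2 + ‖b‖ * ‖z‖ := by rw [norm_mul, norm_mul, norm_pow]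

theorem memFock_cexp_quadratic {a : ℂ} (ha : 2 * ‖a‖ < 1) (b : ℂ) :
    MemFock (fun z => Complex.exp (a * z ^ 2 + b * z)) := by
  refine ⟨by fun_prop, (integrable_rexp_mul_norm_sub_mul_sq_norm (2 * ‖b‖)
    (sub_pos.mpr ha)).mono' (by fun_prop) (Filter.Eventually.of_forall fun z => ?_)⟩
  have hweight : ‖Complex.exp (a * z ^ 2 + b * z)‖ ^ 2 * Real.exp (-‖z‖ ^ 2)
      = Real.exp (2 * (a * z ^ 2 + b * z).re - ‖z‖ ^ 2) := by
    rw [Complex.norm_exp, ← Real.exp_nat_mul, ← Real.exp_add]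
    push_cast
    ring_nf
  rw [hweight, Real.norm_of_nonneg (Real.exp_pos _).le, Real.exp_le_exp]
  linarith [re_quadratic_le a b z]

noncomputable def fockEigenfunction (A B C ζ : ℂ) (z : ℂ) : ℂ :=
  Complex.exp (-(A * z ^ 2) / (2 * C) - (B - ζ) / C * z)

theorem fockEigenfunction_ne_zero (A B C ζ : ℂ) : fockEigenfunction A B C ζ ≠ 0 :=
  fun h => Complex.exp_ne_zero _ (congrFun h 0)

theorem memFock_fockEigenfunction {A C : ℂ} (hAC : ‖A‖ < ‖C‖) (B ζ : ℂ) :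
    MemFock (fockEigenfunction A B C ζ) := by
  have hC : 0 < ‖C‖ := (norm_nonneg A).trans_lt hAC
  have ha : 2 * ‖-A / (2 * C)‖ < 1 := by
    rw [norm_div, norm_neg, norm_mul, Complex.norm_two, ← mul_div_assoc,
      mul_div_mul_left _ _ two_ne_zero, div_lt_one hC]
    exact hAC
  unfold fockEigenfunction
  convert memFock_cexp_quadratic ha (-(B - ζ) / C) using 3 with z
  ring

theorem fockEigenfunction_eigen {C : ℂ} (hC : C ≠ 0) (A B ζ z : ℂ) :
    (A * z + B) * fockEigenfunction A B C ζ z + C * deriv (fockEigenfunction A B C ζ) z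
      = ζ * fockEigenfunction A B C ζ z := by
  have hexponent : HasDerivAt (fun w : ℂ => -(A * w ^ 2) / (2 * C) - (B - ζ) / C * w)
      (-(A * (2 * z)) / (2 * C) - (B - ζ) / C * 1) z := by
    have hsq : HasDerivAt (fun w : ℂ => w ^ 2) (2 * z) z := by
      simpa using hasDerivAt_pow 2 z
    exact ((hsq.const_mul A).neg.div_const (2 * C)).sub ((hasDerivAt_id z).const_mul _)
  unfold fockEigenfunction
  rw [hexponent.cexp.deriv]
  field_simp
  ring

theorem point_spectrum_all_of_C_general (A B C : ℂ) (hAC : ‖A‖ < ‖C‖) :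
    (∀ ζ : ℂ,
      MemFock (fun z : ℂ => Complex.exp (-(A * z ^ 2) / (2 * C) - (B - ζ) / C * z)) ∧
      ∀ z : ℂ,
        (A * z + B) * Complex.exp (-(A * z ^ 2) / (2 * C) - (B - ζ) / C * z) +
          C * deriv (fun w : ℂ => Complex.exp (-(A * w ^ 2) / (2 * C) - (B - ζ) / C * w)) z =
        ζ * Complex.exp (-(A * z ^ 2) / (2 * C) - (B - ζ) / C * z)) ∧
    {ζ : ℂ | ∃ f : ℂ → ℂ, MemFock f ∧
        MemFock (fun z => (A * z + B) * f z + C * deriv f z) ∧ f ≠ 0 ∧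
        ∀ z : ℂ, (A * z + B) * f z + C * deriv f z = ζ * f z} = Set.univ := by
  have hC : C ≠ 0 := norm_pos_iff.mp ((norm_nonneg A).trans_lt hAC)
  have heigen (ζ : ℂ) := fockEigenfunction_eigen hC A B ζ
  refine ⟨fun ζ => ⟨memFock_fockEigenfunction hAC B ζ, heigen ζ⟩,
    Set.eq_univ_of_forall fun ζ => ⟨fockEigenfunction A B C ζ,
      memFock_fockEigenfunction hAC B ζ, ?_, fockEigenfunction_ne_zero A B C ζ, heigen ζ⟩⟩
  rw [funext (heigen ζ)]
  exact (memFock_fockEigenfunction hAC B ζ).const_mul ζ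

theorem point_spectrum_all_of_C (A B C : ℂ) (hC : C ≠ 0) (hAC : ‖A‖ < ‖C‖) :
    (∀ ζ : ℂ,
      MemFock (fun z : ℂ => Complex.exp (-(A * z ^ 2) / (2 * C) - (B - ζ) / C * z)) ∧
      ∀ z : ℂ,
        (A * z + B) * Complex.exp (-(A * z ^ 2) / (2 * C) - (B - ζ) / C * z) +
          C * deriv (fun w : ℂ => Complex.exp (-(A * w ^ 2) / (2 * C) - (B - ζ) / C * w)) z =
        ζ * Complex.exp (-(A * z ^ 2) / (2 * C) - (B - ζ) / C * z)) ∧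
    {ζ : ℂ | ∃ f : ℂ → ℂ, MemFock f ∧
        MemFock (fun z => (A * z + B) * f z + C * deriv f z) ∧ f ≠ 0 ∧
        ∀ z : ℂ, (A * z + B) * f z + C * deriv f z = ζ * f z} = Set.univ :=
  point_spectrum_all_of_C_general A B C hAC
end

section
/- Let A, B, C ∈ ℂ with C ≠ 0 and |A| ≥ |C|. Then the operator f ↦ (Az+B)f + Cf' has no eigenvalues in the Fock space: there is no ζ ∈ ℂ and nonzero f ∈ F²(ℂ) with (Az+B)f(z) + Cf'(z) = ζ f(z) for all z. -/
open MeasureTheory Complex Finset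

/-!
An eigenfunction solves the linear ODE `C f' = (ζ - B - A z) f`, so it equals
`f 0 * exp (a z² + b z)` with `a = -A / (2C)`, and `2‖a‖ = ‖A‖ / ‖C‖ ≥ 1`.
A rotation of the plane, which preserves the Fock weight, turns `a z²` into `-‖a‖ z²`.
Then on every vertical line `z = x + i y` the weighted density `‖f‖² e^{-‖z‖²}` is a positive
multiple of `e^{(2‖a‖ - 1) y² + β y} ≥ e^{β y}`, which is not integrable in `y`;
by Fubini the density is not integrable on `ℂ`.
-/

theorem eq_mul_cexp_sub_of_deriv_eq_mul {f g g' : ℂ → ℂ} (hf : Differentiable ℂ f)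
    (hg : ∀ z, HasDerivAt g (g' z) z) (hode : ∀ z, deriv f z = g' z * f z) (z : ℂ) :
    f z = f 0 * cexp (g z - g 0) := by
  have hderiv : ∀ w, HasDerivAt (fun w => f w * cexp (-g w)) 0 w := fun w => by
    have hfw : HasDerivAt f (g' w * f w) w := hode w ▸ (hf w).hasDerivAt
    exact (hfw.mul (hg w).neg.cexp).congr_deriv (by ring)
  have hconst := is_const_of_deriv_eq_zero (fun w => (hderiv w).differentiableAt)
    (fun w => (hderiv w).deriv) z 0
  rw [Complex.exp_neg, Complex.exp_neg] at hconst
  rw [Complex.exp_sub]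
  field_simp at hconst ⊢
  linear_combination hconst

theorem not_integrable_of_const_mul_exp_le {h : ℝ → ℝ} {K γ : ℝ} (hK : 0 < K)
    (hle : ∀ y, K * Real.exp (γ * y) ≤ h y) : ¬ Integrable h := by
  intro hint
  obtain ⟨S, hS_top, hS⟩ : ∃ S : Set ℝ, volume S = ⊤ ∧ ∀ y ∈ S, 0 ≤ γ * y := by
    rcases le_total 0 γ with hγ | hγ
    · exact ⟨Set.Ici 0, Real.volume_Ici, fun y hy => mul_nonneg hγ hy⟩
    · exact ⟨Set.Iic 0, Real.volume_Iic, fun y hy => mul_nonneg_of_nonpos_of_nonpos hγ hy⟩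
  refine (measure_mono fun y hy => ?_).trans_lt (hint.measure_norm_ge_lt_top hK) |>.ne hS_top
  calc K ≤ K * Real.exp (γ * y) := le_mul_of_one_le_right hK.le (Real.one_le_exp (hS y hy))
    _ ≤ h y := hle y
    _ ≤ ‖h y‖ := Real.le_norm_self _

theorem MeasureTheory.Integrable.exists_integrable_vertical_slice {E : Type*}
    [NormedAddCommGroup E] {F : ℂ → E} (hF : Integrable F) :
    ∃ x : ℝ, Integrable fun y : ℝ => F ⟨x, y⟩ := by
  have hprod : Integrable (fun p : ℝ × ℝ => F (measurableEquivRealProd.symm p))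
      (volume.prod volume) :=
    (volume_preserving_equiv_real_prod.symm.integrable_comp_emb
      (MeasurableEquiv.measurableEmbedding _)).mpr hF
  exact hprod.prod_right_ae.exists

theorem MemFock.comp_mul_circle {f : ℂ → ℂ} (hf : MemFock f) (u : Circle) :
    MemFock fun w => f (u * w) := by
  refine ⟨hf.1.comp (differentiable_id.const_mul _), ?_⟩
  have := (integrable_comp (rotation u) _).mpr hf.2
  simpa only [Function.comp_def, rotation_apply, norm_mul, Circle.norm_coe, one_mul] using this

theorem exists_circle_mul_sq_eq_neg_norm (a : ℂ) : ∃ u : Circle, a * (u : ℂ) ^ 2 = -‖a‖ := by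
  refine ⟨Circle.exp ((Real.pi - a.arg) / 2), ?_⟩
  have hexp : (2 : ℂ) * (((Real.pi - a.arg) / 2 : ℝ) * I) = Real.pi * I + -(a.arg * I) := by
    push_cast; ring
  rw [Circle.coe_exp, ← Complex.exp_nat_mul, Nat.cast_ofNat, hexp, Complex.exp_add,
    Complex.exp_pi_mul_I, Complex.exp_neg]
  have hpolar := Complex.norm_mul_exp_arg_mul_I a
  field_simp
  linear_combination hpolar

theorem norm_mul_cexp_sq_mul_gaussian (c w z : ℂ) :
    ‖c * cexp w‖ ^ 2 * Real.exp (-‖z‖ ^ 2) = ‖c‖ ^ 2 * Real.exp (2 * w.re - ‖z‖ ^ 2) := by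
  rw [norm_mul, mul_pow, Complex.norm_exp, ← Real.exp_nat_mul, mul_assoc, ← Real.exp_add]
  ring_nf

theorem not_memFock_mul_cexp_neg_mul_sq {c : ℂ} (hc : c ≠ 0) {r : ℝ} (hr : 1 ≤ 2 * r) (b : ℂ) :
    ¬ MemFock fun z => c * cexp (-r * z ^ 2 + b * z) := by
  intro hf
  obtain ⟨x, hx⟩ := hf.2.exists_integrable_vertical_slice
  refine not_integrable_of_const_mul_exp_le
    (K := ‖c‖ ^ 2 * Real.exp (-(2 * r + 1) * x ^ 2 + 2 * b.re * x)) (γ := -2 * b.im)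
    (by positivity) (fun y => ?_) hx
  set w : ℂ := ⟨x, y⟩
  have hexponent : 2 * (-r * w ^ 2 + b * w).re - ‖w‖ ^ 2 =
      -(2 * r + 1) * x ^ 2 + 2 * b.re * x + -2 * b.im * y + (2 * r - 1) * y ^ 2 := by
    rw [Complex.sq_norm, Complex.normSq_apply]
    simp only [sq, Complex.add_re, Complex.mul_re, Complex.mul_im, Complex.neg_re,
      Complex.neg_im, Complex.ofReal_re, Complex.ofReal_im, w]
    ring
  dsimp only
  rw [norm_mul_cexp_sq_mul_gaussian, hexponent, mul_assoc, ← Real.exp_add]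
  gcongr ‖c‖ ^ 2 * Real.exp ?_
  exact le_add_of_nonneg_right (by nlinarith [sq_nonneg y])

theorem not_memFock_mul_cexp_quadratic {c : ℂ} (hc : c ≠ 0) {a : ℂ} (ha : 1 ≤ 2 * ‖a‖) (b : ℂ) :
    ¬ MemFock fun z => c * cexp (a * z ^ 2 + b * z) := by
  intro hf
  obtain ⟨u, hu⟩ := exists_circle_mul_sq_eq_neg_norm a
  refine not_memFock_mul_cexp_neg_mul_sq hc ha (b * u) ?_
  convert hf.comp_mul_circle u using 4 with w
  linear_combination w ^ 2 * hu.symm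

theorem no_eigenvalues (A B C : ℂ) (hC : C ≠ 0) (hAC : ‖C‖ ≤ ‖A‖) :
    ¬ ∃ (ζ : ℂ) (f : ℂ → ℂ), MemFock f ∧ f ≠ 0 ∧
      ∀ z : ℂ, (A * z + B) * f z + C * deriv f z = ζ * f z := by
  rintro ⟨ζ, f, hf, hne, heig⟩
  set a : ℂ := -A / (2 * C)
  set b : ℂ := (ζ - B) / C
  have hode : ∀ z, deriv f z = (2 * a * z + b) * f z := fun z => by
    apply mul_left_cancel₀ hC
    simp only [a, b]
    field_simp
    linear_combination heig z
  have hquad : ∀ z : ℂ, HasDerivAt (fun z => a * z ^ 2 + b * z) (2 * a * z + b) z := fun z =>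
    (((hasDerivAt_pow 2 z).const_mul a).add ((hasDerivAt_id z).const_mul b)).congr_deriv
      (by ring)
  have hsol : f = fun z => f 0 * cexp (a * z ^ 2 + b * z) := funext fun z => by
    simpa using eq_mul_cexp_sub_of_deriv_eq_mul hf.1 hquad hode z
  have hf0 : f 0 ≠ 0 := fun h0 => hne (by rw [hsol, h0]; funext z; exact zero_mul _)
  have ha : 1 ≤ 2 * ‖a‖ := by
    rw [norm_div, norm_neg, norm_mul, Complex.norm_two]
    field_simp [norm_pos_iff.mpr hC]
    exact hAC
  exact not_memFock_mul_cexp_quadratic hf0 ha b (hsol ▸ hf)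
end

section
/- Let a, b, c satisfy |a|=1, \bar{a}b+\bar{b}=0, |c|²e^{|b|²}=1, and let D[ψ] be the formal differential expression with polynomial symbols ψ_p(z) = Σ_{j=0}^κ d_{j,p}(az+b)^j where d_{j,p} = d_{p,j}. Then for every entire f, the function C_{a,b,c}(D[ψ](C_{a,b,c}f)) equals D[ψ̂]f, where ψ̂_p(z) = Σ_{j=0}^κ z^j Σ_{ℓ=p}^κ C(ℓ,p) \overline{d_{ℓ,j} a^p b^{ℓ−p}}. -/
open Complex Finset

/-- The formal differential expression $\mathcal D[\psi]$. -/
noncomputable def diffExpr (κ : ℕ) (ψ : ℕ → ℂ → ℂ) (f : ℂ → ℂ) : ℂ → ℂ :=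
  fun z => ∑ p ∈ Finset.range (κ + 1), ψ p z * iteratedDeriv p f z

private lemma hasDerivAt_conj_conj {f : ℂ → ℂ} {d x : ℂ}
    (hf : HasDerivAt f d ((starRingEnd ℂ) x)) :
    HasDerivAt (fun z => (starRingEnd ℂ) (f ((starRingEnd ℂ) z))) ((starRingEnd ℂ) d) x := by
  have h1 : HasFDerivAt (fun z : ℂ => (starRingEnd ℂ) z)
      (Complex.conjCLE.toContinuousLinearMap) x := by
    exact Complex.conjCLE.hasFDerivAt (x := x)
  have h1' : HasFDerivAt (fun z : ℂ => (starRingEnd ℂ) z)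
      (Complex.conjCLE.toContinuousLinearMap) (f ((starRingEnd ℂ) x)) := by
    exact
      Complex.conjCLE.hasFDerivAt (x := f ((starRingEnd ℂ) x))
  have h2 := (hf.hasFDerivAt.restrictScalars ℝ).comp x h1
  have h3 := h1'.comp x h2
  rw [hasDerivAt_iff_hasFDerivAt]
  apply hasFDerivAt_of_restrictScalars ℝ (f' := ContinuousLinearMap.smulRight
    (1 : ℂ →L[ℂ] ℂ) ((starRingEnd ℂ) d)) h3
  ext v
  simp [Complex.conjCLE_apply, mul_comm]

private lemma diff_iteratedDeriv {f : ℂ → ℂ} (hf : Differentiable ℂ f) (j : ℕ) :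
    Differentiable ℂ (iteratedDeriv j f) := by
  rw [iteratedDeriv_eq_iterate]
  exact (ContDiff.iterate_deriv j (hf.contDiff : ContDiff ℂ (⊤ : ℕ∞) f)).differentiable (by simp)

private lemma fockConj_iteratedDeriv (a b c : ℂ) {f : ℂ → ℂ} (hf : Differentiable ℂ f)
    (p : ℕ) (w : ℂ) :
    iteratedDeriv p (fockConj a b c f) w =
      c * Complex.exp (b * w) * ∑ j ∈ Finset.range (p + 1),
        (p.choose j : ℂ) * a ^ j * b ^ (p - j) *
          (starRingEnd ℂ) (iteratedDeriv j f ((starRingEnd ℂ) (a * w + b))) := by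
  induction p generalizing w with
  | zero => simp [fockConj]
  | succ p ih =>
    have hD : ∀ (j : ℕ) (w : ℂ), HasDerivAt
        (fun w => (starRingEnd ℂ) (iteratedDeriv j f ((starRingEnd ℂ) (a * w + b))))
        (a * (starRingEnd ℂ) (iteratedDeriv (j + 1) f ((starRingEnd ℂ) (a * w + b)))) w := by
      intro j w
      have h0 : HasDerivAt (iteratedDeriv j f)
          (deriv (iteratedDeriv j f) ((starRingEnd ℂ) (a * w + b)))
          ((starRingEnd ℂ) (a * w + b)) :=
        (diff_iteratedDeriv hf j _).hasDerivAt
      have h1 := hasDerivAt_conj_conj (x := a * w + b) h0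
      have h2 : HasDerivAt (fun w : ℂ => a * w + b) a w := by
        simpa using ((hasDerivAt_id w).const_mul a).add_const b
      have h3 := h1.comp w h2
      simp only [Function.comp_def] at h3
      rw [iteratedDeriv_succ]
      simpa [mul_comm] using h3
    have hS : HasDerivAt
        (fun w => ∑ j ∈ Finset.range (p + 1),
          (p.choose j : ℂ) * a ^ j * b ^ (p - j) *
            (starRingEnd ℂ) (iteratedDeriv j f ((starRingEnd ℂ) (a * w + b))))
        (∑ j ∈ Finset.range (p + 1),
          (p.choose j : ℂ) * a ^ j * b ^ (p - j) *
            (a * (starRingEnd ℂ) (iteratedDeriv (j + 1) f ((starRingEnd ℂ) (a * w + b))))) w :=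
      HasDerivAt.fun_sum fun j _ => (hD j w).const_mul _
    have hexp : HasDerivAt (fun w : ℂ => c * Complex.exp (b * w))
        (c * (Complex.exp (b * w) * b)) w := by
      simpa using (((hasDerivAt_id w).const_mul b).cexp).const_mul c
    have hmul := hexp.fun_mul hS
    rw [iteratedDeriv_succ]
    have heq : deriv (iteratedDeriv p (fockConj a b c f)) w =
        deriv (fun w => c * Complex.exp (b * w) *
          ∑ j ∈ Finset.range (p + 1),
            (p.choose j : ℂ) * a ^ j * b ^ (p - j) *
              (starRingEnd ℂ) (iteratedDeriv j f ((starRingEnd ℂ) (a * w + b)))) w := by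
      congr 1
      funext u
      exact ih u
    rw [heq, hmul.deriv]
    set F : ℕ → ℂ := fun j => (starRingEnd ℂ) (iteratedDeriv j f ((starRingEnd ℂ) (a * w + b)))
      with hF
    have key : b * (∑ j ∈ Finset.range (p + 1),
          (p.choose j : ℂ) * a ^ j * b ^ (p - j) * F j)
        + ∑ j ∈ Finset.range (p + 1),
          (p.choose j : ℂ) * a ^ j * b ^ (p - j) * (a * F (j + 1))
        = ∑ j ∈ Finset.range (p + 1 + 1),
          ((p + 1).choose j : ℂ) * a ^ j * b ^ (p + 1 - j) * F j := by
      rw [Finset.sum_range_succ'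
        (fun j => ((p + 1).choose j : ℂ) * a ^ j * b ^ (p + 1 - j) * F j) (p + 1)]
      have hsplit : ∀ i ∈ Finset.range (p + 1),
          (((p + 1).choose (i + 1) : ℂ)) * a ^ (i + 1) * b ^ (p + 1 - (i + 1)) * F (i + 1)
          = (p.choose i : ℂ) * a ^ i * b ^ (p - i) * (a * F (i + 1))
            + (p.choose (i + 1) : ℂ) * a ^ (i + 1) * b ^ (p - i) * F (i + 1) := by
        intro i _
        have hsub : p + 1 - (i + 1) = p - i := by omega
        rw [hsub, Nat.choose_succ_succ]
        push_cast
        ring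
      rw [Finset.sum_congr rfl hsplit, Finset.sum_add_distrib]
      have h2 : ∑ i ∈ Finset.range (p + 1),
          (p.choose (i + 1) : ℂ) * a ^ (i + 1) * b ^ (p - i) * F (i + 1)
          + ((p + 1).choose 0 : ℂ) * a ^ 0 * b ^ (p + 1 - 0) * F 0
          = b * ∑ j ∈ Finset.range (p + 1),
              (p.choose j : ℂ) * a ^ j * b ^ (p - j) * F j := by
        rw [Finset.mul_sum,
          Finset.sum_range_succ'
            (fun j => b * ((p.choose j : ℂ) * a ^ j * b ^ (p - j) * F j)) p,
          Finset.sum_range_succ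
            (fun i => (p.choose (i + 1) : ℂ) * a ^ (i + 1) * b ^ (p - i) * F (i + 1)) p]
        simp only [Nat.choose_succ_self, Nat.cast_zero, zero_mul, mul_zero, add_zero]
        congr 1
        · apply Finset.sum_congr rfl
          intro i hi
          rw [Finset.mem_range] at hi
          have hsub : p - i = (p - (i + 1)) + 1 := by omega
          rw [hsub, pow_succ]
          ring
        · simp only [Nat.choose_zero_right, Nat.cast_one, pow_zero, Nat.sub_zero, one_mul]
          rw [pow_succ]
          ring
      rw [add_assoc, h2]
      ring
    rw [← key]
    ring

theorem conj_diffExpr_conj (a b c : ℂ) (κ : ℕ)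
    (ha : ‖a‖ = 1) (hab : (starRingEnd ℂ) a * b + (starRingEnd ℂ) b = 0)
    (hc : ‖c‖ ^ 2 * Real.exp (‖b‖ ^ 2) = 1)
    (d : ℕ → ℕ → ℂ) (hd : ∀ j p, j ≤ κ → p ≤ κ → d j p = d p j)
    (f : ℂ → ℂ) (hf : Differentiable ℂ f) :
    ∀ z : ℂ,
      fockConj a b c
        (diffExpr κ (fun p w => ∑ j ∈ Finset.range (κ + 1), d j p * (a * w + b) ^ j)
          (fockConj a b c f)) z =
      diffExpr κ
        (fun p w => ∑ j ∈ Finset.range (κ + 1), w ^ j *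
          ∑ ℓ ∈ Finset.Icc p κ, (ℓ.choose p : ℂ) *
            (starRingEnd ℂ) (d ℓ j * a ^ p * b ^ (ℓ - p))) f z := by
  intro z
  have haa : (starRingEnd ℂ) a * a = 1 := by
    rw [mul_comm, Complex.mul_conj, ← Complex.sq_norm, ha]
    norm_num
  have hba : (starRingEnd ℂ) b * a = -b := by
    have h : (starRingEnd ℂ) b = -((starRingEnd ℂ) a * b) := by linear_combination hab
    rw [h]
    calc -((starRingEnd ℂ) a * b) * a = -(((starRingEnd ℂ) a * a) * b) := by ring
    _ = -b := by rw [haa]; ring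
  set w : ℂ := (starRingEnd ℂ) (a * z + b) with hw
  have hconjw : (starRingEnd ℂ) (a * w + b) = z := by
    rw [hw]
    simp only [map_add, map_mul, Complex.conj_conj]
    calc (starRingEnd ℂ) a * (a * z + b) + (starRingEnd ℂ) b
        = ((starRingEnd ℂ) a * a) * z + ((starRingEnd ℂ) a * b + (starRingEnd ℂ) b) := by ring
      _ = z := by rw [haa, hab]; ring
  have hunit : c * Complex.exp (b * z) * ((starRingEnd ℂ) c *
      Complex.exp ((starRingEnd ℂ) (b * w))) = 1 := by
    rw [hw]
    simp only [map_mul, Complex.conj_conj]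
    have hbb : b * z + (starRingEnd ℂ) b * (a * z + b) = (Complex.normSq b : ℂ) := by
      calc b * z + (starRingEnd ℂ) b * (a * z + b)
          = (b + (starRingEnd ℂ) b * a) * z + (starRingEnd ℂ) b * b := by ring
        _ = (Complex.normSq b : ℂ) := by
            rw [hba, mul_comm ((starRingEnd ℂ) b) b, Complex.mul_conj]; ring
    calc c * Complex.exp (b * z) * ((starRingEnd ℂ) c * Complex.exp ((starRingEnd ℂ) b * (a * z + b)))
        = (c * (starRingEnd ℂ) c) * Complex.exp (b * z + (starRingEnd ℂ) b * (a * z + b)) := by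
          rw [Complex.exp_add]; ring
      _ = 1 := by
          rw [Complex.mul_conj, hbb, ← Complex.ofReal_exp, ← Complex.ofReal_mul, ← Complex.sq_norm,
            ← Complex.sq_norm, hc, Complex.ofReal_one]
  -- unfold and compute
  simp only [fockConj, diffExpr]
  rw [show (starRingEnd ℂ) (a * z + b) = w from rfl]
  simp only [fockConj_iteratedDeriv a b c hf]
  simp only [map_sum, map_mul, map_pow, Complex.conj_conj, map_natCast, hconjw]
  have hunit' : c * Complex.exp (b * z) *
      ((starRingEnd ℂ) c * (starRingEnd ℂ) (Complex.exp (b * w))) = 1 := by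
    rw [← Complex.exp_conj]; exact hunit
  -- canonical triple-sum forms
  have e1 : c * Complex.exp (b * z) *
      ∑ p ∈ Finset.range (κ + 1),
        (∑ j ∈ Finset.range (κ + 1), (starRingEnd ℂ) (d j p) * z ^ j) *
          ((starRingEnd ℂ) c * (starRingEnd ℂ) (Complex.exp (b * w)) *
            ∑ i ∈ Finset.range (p + 1),
              (p.choose i : ℂ) * (starRingEnd ℂ) a ^ i * (starRingEnd ℂ) b ^ (p - i) *
                iteratedDeriv i f z) =
      ∑ p ∈ Finset.range (κ + 1), ∑ i ∈ Finset.range (p + 1), ∑ j ∈ Finset.range (κ + 1),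
        (p.choose i : ℂ) * (starRingEnd ℂ) (d j p) * z ^ j * (starRingEnd ℂ) a ^ i *
          (starRingEnd ℂ) b ^ (p - i) * iteratedDeriv i f z := by
    rw [Finset.mul_sum]
    refine Finset.sum_congr rfl fun p _ => ?_
    calc c * Complex.exp (b * z) *
        ((∑ j ∈ Finset.range (κ + 1), (starRingEnd ℂ) (d j p) * z ^ j) *
          ((starRingEnd ℂ) c * (starRingEnd ℂ) (Complex.exp (b * w)) *
            ∑ i ∈ Finset.range (p + 1),
              (p.choose i : ℂ) * (starRingEnd ℂ) a ^ i * (starRingEnd ℂ) b ^ (p - i) *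
                iteratedDeriv i f z))
        = (c * Complex.exp (b * z) *
            ((starRingEnd ℂ) c * (starRingEnd ℂ) (Complex.exp (b * w)))) *
          ((∑ j ∈ Finset.range (κ + 1), (starRingEnd ℂ) (d j p) * z ^ j) *
            ∑ i ∈ Finset.range (p + 1),
              (p.choose i : ℂ) * (starRingEnd ℂ) a ^ i * (starRingEnd ℂ) b ^ (p - i) *
                iteratedDeriv i f z) := by ring
      _ = (∑ j ∈ Finset.range (κ + 1), (starRingEnd ℂ) (d j p) * z ^ j) *
            ∑ i ∈ Finset.range (p + 1),
              (p.choose i : ℂ) * (starRingEnd ℂ) a ^ i * (starRingEnd ℂ) b ^ (p - i) *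
                iteratedDeriv i f z := by rw [hunit', one_mul]
      _ = ∑ j ∈ Finset.range (κ + 1), ∑ i ∈ Finset.range (p + 1),
            ((starRingEnd ℂ) (d j p) * z ^ j) *
              ((p.choose i : ℂ) * (starRingEnd ℂ) a ^ i * (starRingEnd ℂ) b ^ (p - i) *
                iteratedDeriv i f z) := by rw [Finset.sum_mul_sum]
      _ = ∑ i ∈ Finset.range (p + 1), ∑ j ∈ Finset.range (κ + 1),
            (p.choose i : ℂ) * (starRingEnd ℂ) (d j p) * z ^ j * (starRingEnd ℂ) a ^ i *
              (starRingEnd ℂ) b ^ (p - i) * iteratedDeriv i f z := by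
          rw [Finset.sum_comm]
          exact Finset.sum_congr rfl fun i _ => Finset.sum_congr rfl fun j _ => by ring
  rw [e1]
  have e2 : ∑ p ∈ Finset.range (κ + 1),
      (∑ j ∈ Finset.range (κ + 1), z ^ j *
        ∑ ℓ ∈ Finset.Icc p κ, (ℓ.choose p : ℂ) *
          ((starRingEnd ℂ) (d ℓ j) * (starRingEnd ℂ) a ^ p * (starRingEnd ℂ) b ^ (ℓ - p))) *
        iteratedDeriv p f z =
      ∑ i ∈ Finset.range (κ + 1), ∑ p ∈ Finset.Icc i κ, ∑ j ∈ Finset.range (κ + 1),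
        (p.choose i : ℂ) * (starRingEnd ℂ) (d p j) * z ^ j * (starRingEnd ℂ) a ^ i *
          (starRingEnd ℂ) b ^ (p - i) * iteratedDeriv i f z := by
    refine Finset.sum_congr rfl fun i _ => ?_
    calc (∑ j ∈ Finset.range (κ + 1), z ^ j *
          ∑ ℓ ∈ Finset.Icc i κ, (ℓ.choose i : ℂ) *
            ((starRingEnd ℂ) (d ℓ j) * (starRingEnd ℂ) a ^ i * (starRingEnd ℂ) b ^ (ℓ - i))) *
          iteratedDeriv i f z
        = ∑ j ∈ Finset.range (κ + 1), ∑ ℓ ∈ Finset.Icc i κ,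
            (ℓ.choose i : ℂ) * (starRingEnd ℂ) (d ℓ j) * z ^ j * (starRingEnd ℂ) a ^ i *
              (starRingEnd ℂ) b ^ (ℓ - i) * iteratedDeriv i f z := by
          rw [Finset.sum_mul]
          refine Finset.sum_congr rfl fun j _ => ?_
          rw [Finset.mul_sum, Finset.sum_mul]
          exact Finset.sum_congr rfl fun ℓ _ => by ring
      _ = ∑ ℓ ∈ Finset.Icc i κ, ∑ j ∈ Finset.range (κ + 1),
            (ℓ.choose i : ℂ) * (starRingEnd ℂ) (d ℓ j) * z ^ j * (starRingEnd ℂ) a ^ i *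
              (starRingEnd ℂ) b ^ (ℓ - i) * iteratedDeriv i f z := Finset.sum_comm
  rw [e2]
  rw [Finset.sum_comm' (s := Finset.range (κ + 1)) (t := fun p => Finset.range (p + 1))
    (t' := Finset.range (κ + 1)) (s' := fun i => Finset.Icc i κ)
    (by intro p i; simp only [Finset.mem_range, Finset.mem_Icc]; omega)]
  refine Finset.sum_congr rfl fun i hi => Finset.sum_congr rfl fun p hp =>
    Finset.sum_congr rfl fun j hj => ?_
  rw [Finset.mem_Icc] at hp
  rw [Finset.mem_range] at hj
  rw [hd j p (by omega) (by omega)]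
end
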